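/- Let k be even and G = G_0(u) ⋄ H(u) be a connected k-uniform hypergraph. If y is a first eigenvector of G_0 with y_u ≠ 0, then λ_min(G_0) > λ_min(G) (strict inequality). -/

import Mathlib

open Finset BigOperators

variable {V : Type*}

/-- A `k`-uniform hypergraph given by its edge set: every edge has exactly `k` vertices. -/
def Uniform [DecidableEq V] (E : Finset (Finset V)) (k : ℕ) : Prop :=
  ∀ e ∈ E, e.card = k

/-- Two vertices are adjacent if some edge contains both. -/
def HAdj [DecidableEq V] (E : Finset (Finset V)) (a b : V) : Prop :=
  a ≠ b ∧ ∃ e ∈ E, a ∈ e ∧ b ∈ e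

/-- The hypergraph is connected: every two vertices are joined by a walk. -/
def HConnected [DecidableEq V] (E : Finset (Finset V)) : Prop :=
  ∀ a b : V, Relation.ReflTransGen (HAdj E) a b

/-- `(lam, x)` satisfies the H-eigen equations of the adjacency tensor:
for each vertex `v`, `∑_{e ∋ v} ∏_{w ∈ e \ {v}} x w = lam * (x v)^(k-1)`. -/
def isEig [Fintype V] [DecidableEq V] (E : Finset (Finset V)) (k : ℕ) (lam : ℝ) (x : V → ℝ) :
    Prop :=
  ∀ v : V, (∑ e ∈ E.filter (fun e => v ∈ e), ∏ w ∈ e.erase v, x w) = lam * x v ^ (k - 1)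

/-- The set of H-eigenvalues of the adjacency tensor of the hypergraph. -/
def specH [Fintype V] [DecidableEq V] (E : Finset (Finset V)) (k : ℕ) : Set ℝ :=
  {lam | ∃ x : V → ℝ, x ≠ 0 ∧ isEig E k lam x}

/-- The least H-eigenvalue of the adjacency tensor. -/
noncomputable def lamMin [Fintype V] [DecidableEq V] (E : Finset (Finset V)) (k : ℕ) : ℝ :=
  sInf (specH E k)

/-- A first eigenvector: a real eigenvector associated with the least H-eigenvalue. -/
def IsFirstEigvec [Fintype V] [DecidableEq V] (E : Finset (Finset V)) (k : ℕ) (x : V → ℝ) :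
    Prop :=
  x ≠ 0 ∧ isEig E k (lamMin E k) x

/-!
For even `k` the least H-eigenvalue is the minimum of the Rayleigh quotient
`k * adjForm E x / ‖x‖_k^k`: a minimiser on the unit `k`-sphere exists by compactness and is an
eigenvector by Lagrange multipliers. Extend a first eigenvector `y` of `G₀` by `-t * y u` on the
other vertices of an edge of `H` through `u`. The numerator drops by `k t^(k-1) (y u)^k`, while the
denominator grows only by `(k-1) t^k (y u)^k`, so for small `t > 0` the quotient of the extended
vector is strictly below `λ_min(G₀)`.
-/

/-- With the normalisation of `isEig`, `k * adjForm E x` is the value `A x^k` of the adjacency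
tensor form. -/
noncomputable def adjForm (E : Finset (Finset V)) (x : V → ℝ) : ℝ :=
  ∑ e ∈ E, ∏ w ∈ e, x w

noncomputable def powSum [Fintype V] (k : ℕ) (x : V → ℝ) : ℝ :=
  ∑ v, x v ^ k

section Rayleigh

variable {E : Finset (Finset V)} {k : ℕ}

theorem isEig.mul_sum_pow_eq [Fintype V] [DecidableEq V] {lam : ℝ} {x : V → ℝ} {S : Finset V}
    (hx : isEig E k lam x) (hU : Uniform E k) (hk0 : 0 < k) (hS : ∀ e ∈ E, e ⊆ S) :
    lam * ∑ v ∈ S, x v ^ k = k * adjForm E x := by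
  obtain ⟨m, rfl⟩ : ∃ m, k = m + 1 := ⟨k - 1, by omega⟩
  calc lam * ∑ v ∈ S, x v ^ (m + 1)
      = ∑ v ∈ S, ∑ e ∈ E, if v ∈ e then ∏ w ∈ e, x w else 0 := by
        refine mul_sum _ _ _ |>.trans (sum_congr rfl fun v _ => ?_)
        have hv := hx v
        rw [Nat.add_sub_cancel] at hv
        rw [← sum_filter, pow_succ, ← mul_assoc, ← hv, sum_mul]
        exact sum_congr rfl fun e he => prod_erase_mul e x (mem_filter.1 he).2
    _ = ∑ e ∈ E, ∑ v ∈ e, ∏ w ∈ e, x w := by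
        rw [sum_comm]
        refine sum_congr rfl fun e he => ?_
        rw [sum_ite_mem, inter_eq_right.2 (hS e he)]
    _ = (m + 1 : ℕ) * adjForm E x := by
        rw [adjForm, mul_sum]
        refine sum_congr rfl fun e he => ?_
        rw [sum_const, hU e he, nsmul_eq_mul]

theorem powSum_smul [Fintype V] (s : ℝ) (x : V → ℝ) :
    powSum k (s • x) = s ^ k * powSum k x := by
  simp only [powSum, Pi.smul_apply, smul_eq_mul, mul_pow, mul_sum]

theorem adjForm_smul [DecidableEq V] (hU : Uniform E k) (s : ℝ) (x : V → ℝ) :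
    adjForm E (s • x) = s ^ k * adjForm E x := by
  simp only [adjForm, Pi.smul_apply, smul_eq_mul, prod_mul_distrib, prod_const, mul_sum]
  exact sum_congr rfl fun e he => by rw [hU e he]

theorem powSum_pos [Fintype V] (hk : Even k) {x : V → ℝ} (hx : x ≠ 0) : 0 < powSum k x := by
  obtain ⟨v, hv⟩ := Function.ne_iff.mp hx
  exact sum_pos' (fun w _ => hk.pow_nonneg (x w)) ⟨v, mem_univ v, hk.pow_pos hv⟩

theorem ne_zero_of_powSum_eq_one [Fintype V] (hk0 : 0 < k) {x : V → ℝ} (hx : powSum k x = 1) :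
    x ≠ 0 := by
  rintro rfl
  simp [powSum, zero_pow hk0.ne'] at hx

theorem exists_powSum_smul_eq_one [Fintype V] (hk : Even k) (hk0 : 0 < k) {z : V → ℝ}
    (hz : z ≠ 0) : ∃ s : ℝ, powSum k (s • z) = 1 := by
  have hzpos := powSum_pos hk hz
  refine ⟨(powSum k z)⁻¹ ^ (k⁻¹ : ℝ), ?_⟩
  rw [powSum_smul, Real.rpow_inv_natCast_pow (inv_nonneg.2 hzpos.le) hk0.ne',
    inv_mul_cancel₀ hzpos.ne']

theorem continuous_powSum [Fintype V] : Continuous (powSum (V := V) k) := by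
  unfold powSum; fun_prop

theorem continuous_adjForm : Continuous (adjForm E) := by
  unfold adjForm; fun_prop

theorem isCompact_powSum_eq_one [Fintype V] (hk : Even k) (hk0 : 0 < k) :
    IsCompact {x : V → ℝ | powSum k x = 1} := by
  refine (isCompact_closedBall (0 : V → ℝ) 1).of_isClosed_subset
    (isClosed_eq continuous_powSum continuous_const) fun x hx => ?_
  rw [Metric.mem_closedBall, dist_zero_right,
    pi_norm_le_iff_of_nonneg zero_le_one]
  intro v
  have hv : x v ^ k ≤ 1 :=
    hx ▸ single_le_sum (f := fun w => x w ^ k) (fun w _ => hk.pow_nonneg (x w)) (mem_univ v)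
  rw [Real.norm_eq_abs, ← pow_le_one_iff_of_nonneg (abs_nonneg _) hk0.ne', hk.pow_abs]
  exact hv

end Rayleigh

section Lagrange

theorem hasStrictFDerivAt_powSum [Fintype V] (k : ℕ) (x : V → ℝ) :
    HasStrictFDerivAt (powSum k)
      (∑ v, ((k : ℝ) * x v ^ (k - 1)) • ContinuousLinearMap.proj (R := ℝ) (φ := fun _ : V => ℝ) v)
      x :=
  .fun_sum fun v _ => (hasStrictDerivAt_pow k (x v)).comp_hasStrictFDerivAt x
    (hasStrictFDerivAt_apply v x)

variable [Fintype V] [DecidableEq V] {E : Finset (Finset V)} {k : ℕ}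

theorem hasStrictFDerivAt_adjForm (E : Finset (Finset V)) (x : V → ℝ) :
    HasStrictFDerivAt (adjForm E)
      (∑ e ∈ E, ∑ v ∈ e,
        (∏ w ∈ e.erase v, x w) • ContinuousLinearMap.proj (R := ℝ) (φ := fun _ : V => ℝ) v) x :=
  .fun_sum fun _ _ => .finsetProd fun w _ => hasStrictFDerivAt_apply w x

theorem isEig_of_isMinOn (hU : Uniform E k) (hk0 : 0 < k) {x₀ : V → ℝ}
    (hx₀ : powSum k x₀ = 1) (hmin : IsMinOn (adjForm E) {x | powSum k x = 1} x₀) :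
    isEig E k (k * adjForm E x₀) x₀ := by
  have hextr : IsLocalExtrOn (adjForm E) {x | powSum k x = powSum k x₀} x₀ :=
    .inl (hx₀ ▸ hmin.localize)
  obtain ⟨a, b, hab, hab'⟩ := hextr.exists_multipliers_of_hasStrictFDerivAt_1d
    (hasStrictFDerivAt_powSum k x₀) (hasStrictFDerivAt_adjForm E x₀)
  have hcoord : ∀ v, a * (k * x₀ v ^ (k - 1)) +
      b * ∑ e ∈ E.filter (fun e => v ∈ e), ∏ w ∈ e.erase v, x₀ w = 0 := fun v => by
    simpa [Pi.single_apply, sum_filter] using congrArg (· (Pi.single v 1)) hab'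
  have hb : b ≠ 0 := by
    rintro rfl
    obtain ⟨v, hv⟩ := Function.ne_iff.mp (ne_zero_of_powSum_eq_one hk0 hx₀)
    have ha : a ≠ 0 := fun ha => hab (by simp [ha])
    have h := hcoord v
    rw [zero_mul, add_zero] at h
    have hpow := (mul_eq_zero.1 ((mul_eq_zero.1 h).resolve_left ha)).resolve_left
      (Nat.cast_ne_zero.2 hk0.ne')
    exact hv (pow_eq_zero_iff'.1 hpow).1
  have heig : isEig E k (-(a / b) * k) x₀ := fun v => by
    field_simp
    linear_combination hcoord v
  have hlam := heig.mul_sum_pow_eq hU hk0 (S := univ) fun e _ => subset_univ e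
  rw [show ∑ v, x₀ v ^ k = 1 from hx₀, mul_one] at hlam
  rwa [← hlam]

end Lagrange

section Variational

variable [Fintype V] [DecidableEq V] {E : Finset (Finset V)} {k : ℕ}

theorem adjForm_mul_powSum_le_of_isMinOn (hU : Uniform E k) (hk : Even k) (hk0 : 0 < k)
    {x₀ : V → ℝ} (hmin : IsMinOn (adjForm E) {x | powSum k x = 1} x₀) {z : V → ℝ}
    (hz : z ≠ 0) : adjForm E x₀ * powSum k z ≤ adjForm E z := by
  obtain ⟨s, hs⟩ := exists_powSum_smul_eq_one hk hk0 hz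
  have hle : adjForm E x₀ ≤ s ^ k * adjForm E z := adjForm_smul hU s z ▸ hmin hs
  rw [powSum_smul] at hs
  calc adjForm E x₀ * powSum k z ≤ s ^ k * adjForm E z * powSum k z :=
        mul_le_mul_of_nonneg_right hle (powSum_pos hk hz).le
    _ = adjForm E z := by rw [mul_right_comm, hs, one_mul]

theorem isLeast_specH_of_isMinOn (hU : Uniform E k) (hk : Even k) (hk0 : 0 < k)
    {x₀ : V → ℝ} (hx₀ : powSum k x₀ = 1) (hmin : IsMinOn (adjForm E) {x | powSum k x = 1} x₀) :
    IsLeast (specH E k) (k * adjForm E x₀) := by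
  refine ⟨⟨x₀, ne_zero_of_powSum_eq_one hk0 hx₀, isEig_of_isMinOn hU hk0 hx₀ hmin⟩, ?_⟩
  rintro μ ⟨x, hx, heig⟩
  have hμ : μ * powSum k x = k * adjForm E x :=
    heig.mul_sum_pow_eq hU hk0 fun e _ => subset_univ e
  have hle := adjForm_mul_powSum_le_of_isMinOn hU hk hk0 hmin hx
  refine le_of_mul_le_mul_right ?_ (powSum_pos hk hx)
  rw [hμ, mul_assoc]
  gcongr

theorem lamMin_mul_powSum_le (hU : Uniform E k) (hk : Even k) (hk0 : 0 < k) (z : V → ℝ) :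
    lamMin E k * powSum k z ≤ k * adjForm E z := by
  rcases eq_or_ne z 0 with rfl | hz
  · have hzero : adjForm E 0 = 0 :=
      sum_eq_zero fun e he => by simp [hU e he, zero_pow hk0.ne']
    simp [powSum, hzero, zero_pow hk0.ne']
  obtain ⟨s, hs⟩ := exists_powSum_smul_eq_one hk hk0 hz
  obtain ⟨x₀, hx₀, hmin⟩ := (isCompact_powSum_eq_one hk hk0).exists_isMinOn ⟨s • z, hs⟩
    continuous_adjForm.continuousOn
  rw [lamMin, (isLeast_specH_of_isMinOn hU hk hk0 hx₀ hmin).csInf_eq, mul_assoc]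
  gcongr
  exact adjForm_mul_powSum_le_of_isMinOn hU hk hk0 hmin hz

end Variational

theorem HConnected.exists_edge_mem_notMem [DecidableEq V] {E : Finset (Finset V)}
    (h : HConnected E) {S : Set V} {a b : V} (ha : a ∈ S) (hb : b ∉ S) :
    ∃ e ∈ E, ∃ x ∈ e, ∃ y ∈ e, x ∈ S ∧ y ∉ S := by
  by_contra! hno
  suffices ∀ c, Relation.ReflTransGen (HAdj E) a c → c ∈ S from hb (this b (h a b))
  intro c hc
  induction hc with
  | refl => exact ha
  | tail _ hadj ih =>
    obtain ⟨-, e, he, hx, hy⟩ := hadj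
    exact hno e he _ hx _ hy ih

def extendAlong [DecidableEq V] (V0 e : Finset V) (y : V → ℝ) (a : ℝ) : V → ℝ :=
  fun v => if v ∈ V0 then y v else if v ∈ e then a else 0

section Coalescence

variable [DecidableEq V] {V0 VH : Finset V} {u : V} {E0 EH : Finset (Finset V)} {k : ℕ}

theorem eq_of_inter_eq_singleton (hI : V0 ∩ VH = {u}) {v : V} (h0 : v ∈ V0) (hH : v ∈ VH) :
    v = u :=
  mem_singleton.1 (hI ▸ mem_inter.2 ⟨h0, hH⟩)

theorem disjoint_of_inter_eq_singleton (hI : V0 ∩ VH = {u}) (hE0 : ∀ e ∈ E0, e ⊆ V0)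
    (hEH : ∀ e ∈ EH, e ⊆ VH) (hU0 : Uniform E0 k) (hk : 1 < k) : Disjoint E0 EH :=
  disjoint_left.2 fun e h0 hH => by
    have hcard := card_le_card (hI ▸ subset_inter (hE0 e h0) (hEH e hH))
    rw [hU0 e h0, card_singleton] at hcard
    omega

theorem exists_mem_edge_of_hConnected (hI : V0 ∩ VH = {u}) (hE0 : ∀ e ∈ E0, e ⊆ V0)
    (hEH : ∀ e ∈ EH, e ⊆ VH) (hUH : Uniform EH k) (hk : 1 < k)
    (hconn : HConnected (E0 ∪ EH)) (hEHne : EH.Nonempty) : ∃ e ∈ EH, u ∈ e := by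
  obtain ⟨e₁, he₁⟩ := hEHne
  obtain ⟨w, hw, hwu⟩ := exists_mem_ne (hUH e₁ he₁ ▸ hk) u
  obtain ⟨e, he, x, hx, y, hy, hxS, hyS⟩ := hconn.exists_edge_mem_notMem
    (S := {v | v ∈ VH ∧ v ≠ u}) ⟨hEH e₁ he₁ hw, hwu⟩ fun h => h.2 rfl
  rcases mem_union.1 he with h0 | hH
  · exact absurd (eq_of_inter_eq_singleton hI (hE0 e h0 hx) hxS.1) hxS.2
  · obtain rfl : y = u := by_contra fun hyu => hyS ⟨hEH e hH hy, hyu⟩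
    exact ⟨e, hH, hy⟩

theorem card_sdiff_eq_of_inter_eq_singleton (hI : V0 ∩ VH = {u}) {e : Finset V}
    (he : e ⊆ VH) (hu : u ∈ e) : (e \ V0).card = e.card - 1 := by
  have hu0 : u ∈ V0 := (mem_inter.1 (hI ▸ mem_singleton_self u)).1
  rw [card_sdiff, eq_singleton_iff_unique_mem.2 ⟨mem_inter.2 ⟨hu0, hu⟩,
    fun v hv => eq_of_inter_eq_singleton hI (mem_inter.1 hv).1 (he (mem_inter.1 hv).2)⟩,
    card_singleton]

theorem powSum_extendAlong [Fintype V] (hk0 : 0 < k) (V0 e : Finset V) (y : V → ℝ) (a : ℝ) :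
    powSum k (extendAlong V0 e y a) = ∑ v ∈ V0, y v ^ k + (e \ V0).card * a ^ k := by
  rw [powSum, ← sum_add_sum_compl V0]
  congr 1
  · exact sum_congr rfl fun v hv => by rw [extendAlong, if_pos hv]
  · calc ∑ v ∈ V0ᶜ, extendAlong V0 e y a v ^ k
        = ∑ v ∈ V0ᶜ, if v ∈ e then a ^ k else 0 := sum_congr rfl fun v hv => by
          rw [extendAlong, if_neg (mem_compl.1 hv)]
          split_ifs <;> simp [zero_pow hk0.ne']
      _ = (e \ V0).card * a ^ k := by
          rw [sum_ite_mem, sum_const, nsmul_eq_mul, inter_comm, sdiff_eq_inter_compl]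

theorem adjForm_extendAlong_of_subset (hE0 : ∀ e ∈ E0, e ⊆ V0) (e : Finset V) (y : V → ℝ)
    (a : ℝ) : adjForm E0 (extendAlong V0 e y a) = adjForm E0 y :=
  sum_congr rfl fun e' he' => prod_congr rfl fun _ hv => if_pos (hE0 e' he' hv)

theorem adjForm_extendAlong_of_mem (hI : V0 ∩ VH = {u}) (hEH : ∀ e ∈ EH, e ⊆ VH)
    (hUH : Uniform EH k) {eh : Finset V} (heh : eh ∈ EH) (hu : u ∈ eh) (y : V → ℝ) (a : ℝ) :
    adjForm EH (extendAlong V0 eh y a) = y u * a ^ (k - 1) := by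
  have hu0 : u ∈ V0 := (mem_inter.1 (hI ▸ mem_singleton_self u)).1
  have hout : ∀ e ∈ EH, ∀ v ∈ e, v ≠ u → v ∉ V0 := fun e he v hv hvu h0 =>
    hvu (eq_of_inter_eq_singleton hI h0 (hEH e he hv))
  rw [adjForm, sum_eq_single_of_mem eh heh]
  · rw [← mul_prod_erase eh _ hu, prod_congr rfl (g := fun _ => a), prod_const,
      card_erase_of_mem hu, hUH eh heh]
    · simp [extendAlong, hu0]
    · intro v hv
      obtain ⟨hvu, hv⟩ := mem_erase.1 hv
      simp [extendAlong, hout eh heh v hv hvu, hv]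
  · intro e he hne
    obtain ⟨w, hw, hweh⟩ := not_subset.1 fun hsub =>
      hne (eq_of_subset_of_card_le hsub (by rw [hUH e he, hUH eh heh]))
    refine prod_eq_zero hw ?_
    simp [extendAlong, hout e he w hw fun hwu => hweh (hwu ▸ hu), hweh]

theorem adjForm_union_extendAlong (hI : V0 ∩ VH = {u}) (hE0 : ∀ e ∈ E0, e ⊆ V0)
    (hEH : ∀ e ∈ EH, e ⊆ VH) (hU : Uniform (E0 ∪ EH) k) (hk : 1 < k) {eh : Finset V}
    (heh : eh ∈ EH) (hu : u ∈ eh) (y : V → ℝ) (a : ℝ) :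
    adjForm (E0 ∪ EH) (extendAlong V0 eh y a) = adjForm E0 y + y u * a ^ (k - 1) := by
  have hU0 : Uniform E0 k := fun e he => hU e (mem_union_left _ he)
  have hUH : Uniform EH k := fun e he => hU e (mem_union_right _ he)
  rw [adjForm, sum_union (disjoint_of_inter_eq_singleton hI hE0 hEH hU0 hk), ← adjForm,
    ← adjForm, adjForm_extendAlong_of_subset hE0, adjForm_extendAlong_of_mem hI hEH hUH heh hu]

theorem powSum_extendAlong_of_mem [Fintype V] (hI : V0 ∩ VH = {u}) (hEH : ∀ e ∈ EH, e ⊆ VH)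
    (hUH : Uniform EH k) (hk0 : 0 < k) {eh : Finset V} (heh : eh ∈ EH) (hu : u ∈ eh)
    (y : V → ℝ) (a : ℝ) :
    powSum k (extendAlong V0 eh y a) = ∑ v ∈ V0, y v ^ k + (k - 1 : ℕ) * a ^ k := by
  rw [powSum_extendAlong hk0, card_sdiff_eq_of_inter_eq_singleton hI (hEH eh heh) hu,
    hUH eh heh]

end Coalescence

theorem stmt8_general [Fintype V] [DecidableEq V]
    (V0 VH : Finset V) (u : V) (E0 EH : Finset (Finset V)) (k : ℕ)
    (hk : Even k) (hk0 : 0 < k)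
    (hI : V0 ∩ VH = {u})
    (hE0 : ∀ e ∈ E0, e ⊆ V0) (hEH : ∀ e ∈ EH, e ⊆ VH)
    (hU : Uniform (E0 ∪ EH) k) (hconn : HConnected (E0 ∪ EH))
    (hEHne : EH.Nonempty)
    (y : V → ℝ) (hy : IsFirstEigvec E0 k y) (hyu : y u ≠ 0) :
    lamMin (E0 ∪ EH) k < lamMin E0 k := by
  have hk1 : 1 < k := by obtain ⟨m, rfl⟩ := hk; omega
  have hUH : Uniform EH k := fun e he => hU e (mem_union_right _ he)
  obtain ⟨eh, heh, hu⟩ := exists_mem_edge_of_hConnected hI hE0 hEH hUH hk1 hconn hEHne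
  have hN : lamMin E0 k * ∑ v ∈ V0, y v ^ k = k * adjForm E0 y :=
    hy.2.mul_sum_pow_eq (fun e he => hU e (mem_union_left _ he)) hk0 hE0
  obtain ⟨t, ht, hlt⟩ := exists_pos_mul_lt (Nat.cast_pos.2 hk0 : (0 : ℝ) < k)
    (-(lamMin E0 k * (k - 1 : ℕ)))
  have hvar := lamMin_mul_powSum_le hU hk hk0 (extendAlong V0 eh y (-(t * y u)))
  rw [adjForm_union_extendAlong hI hE0 hEH hU hk1 heh hu,
    powSum_extendAlong_of_mem hI hEH hUH hk0 heh hu, hk.neg_pow,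
    (Nat.Even.sub_odd hk0 hk odd_one : Odd (k - 1)).neg_pow] at hvar
  set c := t ^ (k - 1) * y u ^ k with hc_def
  have hc : 0 < c := mul_pos (pow_pos ht _) (hk.pow_pos hyu)
  have hsucc : ∀ r : ℝ, r ^ k = r * r ^ (k - 1) := fun r => by
    rw [← pow_succ', Nat.sub_add_cancel hk0]
  have hpow : (t * y u) ^ k = t * c := by rw [mul_pow, hsucc t]; ring
  have hpow' : y u * (t * y u) ^ (k - 1) = c := by rw [mul_pow, hc_def, hsucc (y u)]; ring
  rw [hpow, mul_neg, hpow'] at hvar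
  by_contra! hge
  have hN0 : 0 ≤ ∑ v ∈ V0, y v ^ k := sum_nonneg fun v _ => hk.pow_nonneg (y v)
  nlinarith [mul_le_mul_of_nonneg_right hge
    (by positivity : (0 : ℝ) ≤ ∑ v ∈ V0, y v ^ k + (k - 1 : ℕ) * (t * c)),
    mul_pos (by linarith : 0 < k + lamMin E0 k * (k - 1 : ℕ) * t) hc]

/-- If `y` is a first eigenvector of `G₀` with `y u ≠ 0`, then `λ_min(G₀) > λ_min(G)` for the coalescence `G = G₀(u) ⋄ H(u)`. -/
theorem stmt8 [Fintype V] [DecidableEq V]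
    (V0 VH : Finset V) (u : V) (E0 EH : Finset (Finset V)) (k : ℕ)
    (hk : Even k) (hk0 : 0 < k)
    (hI : V0 ∩ VH = {u}) (hcover : V0 ∪ VH = Finset.univ)
    (hE0 : ∀ e ∈ E0, e ⊆ V0) (hEH : ∀ e ∈ EH, e ⊆ VH)
    (hU : Uniform (E0 ∪ EH) k) (hconn : HConnected (E0 ∪ EH))
    (hE0ne : E0.Nonempty) (hEHne : EH.Nonempty)
    (y : V → ℝ) (hy : IsFirstEigvec E0 k y) (hyu : y u ≠ 0) :
    lamMin (E0 ∪ EH) k < lamMin E0 k :=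
  stmt8_general V0 VH u E0 EH k hk hk0 hI hE0 hEH hU hconn hEHne y hy hyu
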